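/- arXiv:2507.02247 — 4 statements merged into one kernel-verified Lean document; each statement's English description precedes it below -/
import Mathlib

section
/- Let s > 0, let f : ℝ → ℝ be defined by f(x) = Σ_{j=3}^∞ 2^{−js} cos((11/8)·2^j·x), and for n ≥ 3 set t_n = 8π/(11·2^n). Then the Fourier coefficient of the 2π-periodic function x ↦ f(x − t_n) − f(x) at the frequency N_n = 11·2^{n−3}, with normalization ĝ(n) = (1/(2π)) ∫₀^{2π} g(x) e^{−inx} dx, equals −2^{−ns}. -/
/-!
Expanding the cosine into exponentials, the coefficient of `cos (m (x - t)) - cos (m x)` at a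
frequency `N > 0` is `π (e^{-iNt} - 1)` if `m = N` and `0` otherwise. The series defining `f`
converges absolutely and uniformly, so by dominated convergence its coefficients are taken
termwise; the frequencies `11 · 2^j` are distinct, so only `j = n - 3` contributes, and
`N t_n = π` turns `e^{-iNt} - 1` into `-2`.
-/

open Real Complex intervalIntegral

lemma integral_exp_int_mul_I (k : ℤ) :
    ∫ x in (0:ℝ)..(2 * π), exp (k * I * x) = if k = 0 then (2 * π : ℂ) else 0 := by
  split_ifs with hk
  · simp [hk]
  · have hc : (k : ℂ) * I ≠ 0 := mul_ne_zero (by exact_mod_cast hk) I_ne_zero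
    have hperiod : exp (k * I * (2 * π : ℝ)) = 1 := by
      rw [← exp_int_mul_two_pi_mul_I k]; push_cast; ring_nf
    rw [integral_exp_mul_complex hc, hperiod]
    simp

lemma integral_cos_add_mul_exp (m : ℕ) {N : ℕ} (hN : 0 < N) (φ : ℝ) :
    ∫ x in (0:ℝ)..(2 * π), ((Real.cos (m * x + φ) : ℝ) : ℂ) * exp (-I * N * x)
      = if m = N then π * exp (φ * I) else 0 := by
  have hexpand : ∀ x : ℝ, ((Real.cos (m * x + φ) : ℝ) : ℂ) * exp (-I * N * x)
      = exp (φ * I) / 2 * exp (((m - N : ℤ) : ℂ) * I * x)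
        + exp (-(φ * I)) / 2 * exp (((-(m + N) : ℤ) : ℂ) * I * x) := by
    intro x
    simp only [ofReal_cos, Complex.cos, add_div, add_mul, div_mul_eq_mul_div, ← Complex.exp_add]
    push_cast
    ring_nf
  have hint : ∀ k : ℤ,
      IntervalIntegrable (fun x : ℝ => exp (k * I * x)) MeasureTheory.volume 0 (2 * π) :=
    fun k => (by fun_prop : Continuous _).intervalIntegrable _ _
  rw [integral_congr fun x _ => hexpand x,
    integral_add ((hint _).const_mul _) ((hint _).const_mul _),
    integral_const_mul, integral_const_mul, integral_exp_int_mul_I, integral_exp_int_mul_I,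
    if_neg (show -((m : ℤ) + N) ≠ 0 by omega), mul_zero, add_zero]
  by_cases h : m = N
  · rw [if_pos (by omega), if_pos h]; ring
  · rw [if_neg (by omega), if_neg h, mul_zero]

lemma integral_cos_shift_sub_cos_mul_exp (m : ℕ) {N : ℕ} (hN : 0 < N) (t : ℝ) :
    ∫ x in (0:ℝ)..(2 * π),
        ((Real.cos (m * (x - t)) - Real.cos (m * x) : ℝ) : ℂ) * exp (-I * N * x)
      = if m = N then π * (exp (-(m * t : ℝ) * I) - 1) else 0 := by
  have hsplit : ∀ x : ℝ,
      ((Real.cos (m * (x - t)) - Real.cos (m * x) : ℝ) : ℂ) * exp (-I * N * x)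
        = ((Real.cos (m * x + -(m * t)) : ℝ) : ℂ) * exp (-I * N * x)
          - ((Real.cos (m * x + 0) : ℝ) : ℂ) * exp (-I * N * x) := by
    intro x; push_cast; ring_nf
  rw [integral_congr fun x _ => hsplit x,
    integral_sub ((by fun_prop : Continuous _).intervalIntegrable _ _)
      ((by fun_prop : Continuous _).intervalIntegrable _ _),
    integral_cos_add_mul_exp m hN, integral_cos_add_mul_exp m hN]
  split_ifs <;> simp [mul_sub]

lemma integral_cosSeries_shift_sub_mul_exp {a : ℕ → ℝ} (ha : Summable a) {ω : ℕ → ℕ}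
    (hω : Function.Injective ω) {k : ℕ} (hk : 0 < ω k) (t : ℝ) :
    ∫ x in (0:ℝ)..(2 * π),
        ((∑' j, a j * Real.cos (ω j * (x - t)) - ∑' j, a j * Real.cos (ω j * x) : ℝ) : ℂ)
          * exp (-I * (ω k : ℕ) * x)
      = a k * π * (exp (-(ω k * t : ℝ) * I) - 1) := by
  set F : ℕ → ℝ → ℂ := fun j x =>
    ((a j * (Real.cos (ω j * (x - t)) - Real.cos (ω j * x)) : ℝ) : ℂ)
      * exp (-I * (ω k : ℕ) * x)
  have hsum : ∀ y : ℝ, Summable fun j => a j * Real.cos (ω j * y) := fun y =>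
    ha.abs.of_norm_bounded fun j => by
      simpa [abs_mul] using mul_le_mul_of_nonneg_left (abs_cos_le_one _) (abs_nonneg (a j))
  have hnorm : ∀ j x, ‖F j x‖ ≤ 2 * |a j| := fun j x => by
    have hexp : ‖exp (-I * (ω k : ℕ) * x)‖ = 1 := by rw [Complex.norm_exp]; simp
    have hcos : |Real.cos (ω j * (x - t)) - Real.cos (ω j * x)| ≤ 2 :=
      (abs_sub _ _).trans (by linarith [abs_cos_le_one (ω j * (x - t)), abs_cos_le_one (ω j * x)])
    rw [norm_mul, hexp, mul_one, norm_real, Real.norm_eq_abs, abs_mul, mul_comm 2]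
    exact mul_le_mul_of_nonneg_left hcos (abs_nonneg _)
  have hinterchange : HasSum (fun j => ∫ x in (0:ℝ)..(2 * π), F j x)
      (∫ x in (0:ℝ)..(2 * π),
        ((∑' j, a j * Real.cos (ω j * (x - t)) - ∑' j, a j * Real.cos (ω j * x) : ℝ) : ℂ)
          * exp (-I * (ω k : ℕ) * x)) :=
    hasSum_integral_of_dominated_convergence (fun j _ => 2 * |a j|)
      (fun j => (by fun_prop : Continuous (F j)).aestronglyMeasurable)
      (fun j => Filter.Eventually.of_forall fun x _ => hnorm j x)
      (Filter.Eventually.of_forall fun _ _ => (ha.abs.mul_left 2))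
      intervalIntegrable_const
      (Filter.Eventually.of_forall fun x _ => by
        refine (Complex.hasSum_ofReal.mpr ?_).mul_right _
        simpa only [mul_sub] using ((hsum (x - t)).hasSum.sub (hsum x).hasSum))
  have hterm : ∀ j, ∫ x in (0:ℝ)..(2 * π), F j x
      = if j = k then a k * π * (exp (-(ω k * t : ℝ) * I) - 1) else 0 := fun j => by
    have hfactor : ∀ x : ℝ, F j x =
        a j * (((Real.cos (ω j * (x - t)) - Real.cos (ω j * x) : ℝ) : ℂ)
          * exp (-I * (ω k : ℕ) * x)) := fun x => by
      simp only [F]; push_cast; ring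
    rw [integral_congr fun x _ => hfactor x, integral_const_mul,
      integral_cos_shift_sub_cos_mul_exp _ hk]
    simp only [hω.eq_iff]
    split_ifs with h
    · subst h; ring
    · rw [mul_zero]
  simp only [hterm] at hinterchange
  exact ((hasSum_ite_eq k _).unique hinterchange).symm

lemma summable_two_rpow_neg_add_mul {s : ℝ} (hs : 0 < s) (c : ℝ) :
    Summable fun j : ℕ => (2 : ℝ) ^ (-((j : ℝ) + c) * s) := by
  have hgeom : Summable fun j : ℕ => ((2 : ℝ) ^ (-s)) ^ j :=
    summable_geometric_of_lt_one (by positivity)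
      (Real.rpow_lt_one_of_one_lt_of_neg one_lt_two (neg_lt_zero.mpr hs))
  refine (hgeom.mul_left ((2 : ℝ) ^ (-c * s))).congr fun j => ?_
  rw [← Real.rpow_natCast, ← Real.rpow_mul zero_le_two, ← Real.rpow_add zero_lt_two]
  ring_nf

/-- For `s > 0`, `f(x) = Σ_{j=3}^∞ 2^{-js} cos((11/8)·2^j·x)` and `t_n = 8π/(11·2^n)`
(`n ≥ 3`), the Fourier coefficient of `x ↦ f(x - t_n) - f(x)` at frequency
`N_n = 11·2^{n-3}` equals `-2^{-ns}`. -/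
theorem stmt_7 (s : ℝ) (hs : 0 < s) (f : ℝ → ℝ)
    (hf : ∀ x : ℝ, f x = ∑' j : ℕ,
      (2 : ℝ) ^ (-(((j : ℝ) + 3)) * s) * Real.cos ((11 / 8) * 2 ^ (j + 3) * x))
    (n : ℕ) (hn : 3 ≤ n) (t : ℝ) (ht : t = 8 * π / (11 * 2 ^ n)) :
    (1 / (2 * (π : ℂ))) * ∫ x in (0:ℝ)..(2 * π),
        ((f (x - t) - f x : ℝ) : ℂ)
          * Complex.exp (-Complex.I * ((11 * 2 ^ (n - 3) : ℕ) : ℂ) * (x : ℂ))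
      = -((2 : ℝ) ^ (-(n : ℝ) * s) : ℝ) := by
  have hfreq : ∀ j : ℕ, (11 / 8 : ℝ) * 2 ^ (j + 3) = ((11 * 2 ^ j : ℕ) : ℝ) := fun j => by
    push_cast; ring
  have hω : Function.Injective fun j : ℕ => 11 * 2 ^ j := fun i j h =>
    Nat.pow_right_injective le_rfl (Nat.eq_of_mul_eq_mul_left (by norm_num) h)
  have hshift : ((11 * 2 ^ (n - 3) : ℕ) : ℝ) * t = π := by
    rw [ht, show n = n - 3 + 3 by omega, pow_add]
    push_cast
    field_simp
    norm_num
  have hcoeff : (((n - 3 : ℕ) : ℝ) + 3) = n := by push_cast [Nat.cast_sub hn]; ring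
  simp only [hf, hfreq]
  rw [integral_cosSeries_shift_sub_mul_exp (summable_two_rpow_neg_add_mul hs 3) hω
    (k := n - 3) (by positivity) t, hshift, hcoeff]
  have hπ : (π : ℂ) ≠ 0 := ofReal_ne_zero.mpr pi_ne_zero
  rw [show -(π : ℂ) * I = -(π * I) by ring, Complex.exp_neg, exp_pi_mul_I]
  field_simp
  ring
end

section
/- Let s > 0, let f : ℝ → ℝ be defined by f(x) = Σ_{j=3}^∞ 2^{−js} cos((11/8)·2^j·x), and for n ≥ 3 set t_n = 8π/(11·2^n). Then for every real p with 1 ≤ p < ∞ and every n ≥ 3: 2^{ns} · ( ∫₀^{2π} |f(x − t_n) − f(x)|^p dx )^{1/p} ≥ (2π)^{1/p}; and also 2^{ns} · sup_{x ∈ ℝ} |f(x − t_n) − f(x)| ≥ 1. In particular, since t_n → 0⁺ as n → ∞, the weighted differences 2^{ns}‖f(·−t_n) − f‖_{L^p} do not tend to 0. -/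
/-!
The frequencies `11·2^j` are distinct integers, so on `[0, 2π]` the test function
`cos (11·2^(n-3) x)` isolates a single mode of `f(· - t_n) - f`. Since `t_n` is half the period
of that mode, the shift flips its sign, and the integral equals `-2π·2^(-ns)`. Hence
`∫ |f(· - t_n) - f| ≥ 2π·2^(-ns)`; Hölder's inequality, respectively the bound of the integral
by the supremum, turns this into the `L^p` and `L^∞` lower bounds.
-/

open Real Filter MeasureTheory Function

lemma integral_cos_int_mul_add {ℓ : ℤ} (hℓ : ℓ ≠ 0) (ψ : ℝ) :
    ∫ x in (0 : ℝ)..2 * π, cos (ℓ * x + ψ) = 0 := by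
  have hℓ' : (ℓ : ℝ) ≠ 0 := Int.cast_ne_zero.mpr hℓ
  rw [intervalIntegral.integral_comp_mul_add (fun x => cos x) hℓ', integral_cos, mul_zero, zero_add,
    show (ℓ : ℝ) * (2 * π) + ψ = ψ + ℓ * (2 * π) by ring, sin_add_int_mul_two_pi, sub_self,
    smul_zero]

lemma integral_cos_mul_sub_mul_cos (m : ℕ) {N : ℕ} (hN : 0 < N) (τ : ℝ) :
    ∫ x in (0 : ℝ)..2 * π, cos (m * (x - τ)) * cos (N * x)
      = if m = N then π * cos (N * τ) else 0 := by
  have hprod : ∀ x, cos (m * (x - τ)) * cos (N * x)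
      = (cos (((m + N : ℤ) : ℝ) * x + -(m * τ)) + cos (((m - N : ℤ) : ℝ) * x + -(m * τ))) / 2 := by
    intro x
    rw [cos_add_cos]
    push_cast
    ring_nf
  simp_rw [hprod]
  rw [intervalIntegral.integral_div, intervalIntegral.integral_add
    (Continuous.intervalIntegrable (by fun_prop) _ _)
    (Continuous.intervalIntegrable (by fun_prop) _ _),
    integral_cos_int_mul_add (by omega), zero_add]
  split_ifs with h
  · subst h
    simp only [sub_self, Int.cast_zero, zero_mul, zero_add, cos_neg,
      intervalIntegral.integral_const, sub_zero, smul_eq_mul]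
    ring
  · rw [integral_cos_int_mul_add (by omega), zero_div]

lemma intervalIntegral_tsum_of_norm_le {ι E : Type*} [Countable ι] [NormedAddCommGroup E]
    [NormedSpace ℝ E] [CompleteSpace E] {F : ι → ℝ → E} (hF : ∀ j, Continuous (F j))
    {M : ι → ℝ} (hM : Summable M) (hFM : ∀ j x, ‖F j x‖ ≤ M j) (a b : ℝ) :
    ∫ x in a..b, ∑' j, F j x = ∑' j, ∫ x in a..b, F j x :=
  ((intervalIntegral.hasSum_integral_of_dominated_convergence (fun j _ => M j)
    (fun j => (hF j).aestronglyMeasurable) (fun j => ae_of_all _ fun x _ => hFM j x)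
    (ae_of_all _ fun _ _ => hM) intervalIntegrable_const
    (ae_of_all _ fun x _ => (hM.of_norm_bounded (hFM · x)).hasSum)).tsum_eq).symm

lemma abs_mul_cos_le (a θ : ℝ) : |a * cos θ| ≤ |a| := by
  rw [abs_mul]
  exact mul_le_of_le_one_right (abs_nonneg a) (abs_cos_le_one θ)

lemma abs_tsum_mul_cos_le {a : ℕ → ℝ} (ha : Summable a) (θ : ℕ → ℝ) :
    |∑' j, a j * cos (θ j)| ≤ ∑' j, |a j| := by
  simpa only [Real.norm_eq_abs] using
    tsum_of_norm_bounded (f := fun j => a j * cos (θ j)) ha.abs.hasSum fun j => abs_mul_cos_le _ _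

lemma continuous_tsum_mul_cos {a : ℕ → ℝ} (ha : Summable a) (k : ℕ → ℝ) :
    Continuous fun x => ∑' j, a j * cos (k j * x) :=
  continuous_tsum (fun j => by fun_prop) ha.abs fun j x => abs_mul_cos_le _ _

lemma integral_tsum_mul_cos_mul_cos {a : ℕ → ℝ} (ha : Summable a) {k : ℕ → ℕ}
    (hk : Injective k) (τ : ℝ) {i : ℕ} (hi : 0 < k i) :
    ∫ x in (0 : ℝ)..2 * π, (∑' j, a j * cos (k j * (x - τ))) * cos (k i * x)
      = π * a i * cos (k i * τ) := by
  simp_rw [← tsum_mul_right]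
  rw [intervalIntegral_tsum_of_norm_le (fun j => by fun_prop) ha.abs (fun j x => ?_)]
  · simp_rw [mul_assoc, intervalIntegral.integral_const_mul, integral_cos_mul_sub_mul_cos _ hi,
      hk.eq_iff, mul_ite, mul_zero]
    rw [tsum_ite_eq]
    ring
  · exact (abs_mul_cos_le _ _).trans (abs_mul_cos_le _ _)

lemma abs_integral_mul_cos_le {g : ℝ → ℝ} (hg : Continuous g) {a b : ℝ} (hab : a ≤ b) (c : ℝ) :
    |∫ x in a..b, g x * cos (c * x)| ≤ ∫ x in a..b, |g x| :=
  (intervalIntegral.abs_integral_le_integral_abs hab).trans <|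
    intervalIntegral.integral_mono_on hab (Continuous.intervalIntegrable (by fun_prop) _ _)
      (Continuous.intervalIntegrable (by fun_prop) _ _) fun x _ => abs_mul_cos_le _ _

lemma integral_abs_le_mul_iSup {g : ℝ → ℝ} (hg : Continuous g)
    (hbdd : BddAbove (Set.range fun x => |g x|)) {a b : ℝ} (hab : a ≤ b) :
    ∫ x in a..b, |g x| ≤ (b - a) * ⨆ x, |g x| := by
  simpa using intervalIntegral.integral_mono_on hab
    (Continuous.intervalIntegrable (by fun_prop) _ _)
    (intervalIntegrable_const (μ := volume)) fun x _ => le_ciSup hbdd x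

lemma integral_abs_le_mul_integral_abs_rpow {g : ℝ → ℝ} (hg : Continuous g) {C : ℝ}
    (hC : ∀ x, |g x| ≤ C) {a b p : ℝ} (hab : a ≤ b) (hp : 1 ≤ p) :
    ∫ x in a..b, |g x| ≤ (b - a) ^ (1 - 1 / p) * (∫ x in a..b, |g x| ^ p) ^ (1 / p) := by
  rcases hp.eq_or_lt with rfl | hp
  · simp
  set μ := volume.restrict (Set.Ioc a b)
  have hμ : μ.real Set.univ = b - a := by simp [μ, hab]
  have hpq : p.HolderConjugate p.conjExponent := .conjExponent hp
  have hg_mem : MemLp (fun x => |g x|) (ENNReal.ofReal p) μ :=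
    MemLp.of_bound hg.abs.aestronglyMeasurable C (ae_of_all _ fun x => by simpa using hC x)
  have H := integral_mul_le_Lp_mul_Lq_of_nonneg hpq (ae_of_all _ fun x => abs_nonneg (g x))
    (ae_of_all _ fun _ => zero_le_one) hg_mem (memLp_const (μ := μ) (1 : ℝ))
  have hq : 1 / p.conjExponent = 1 - 1 / p := by
    rw [eq_sub_iff_add_eq, one_div, one_div, add_comm]; exact hpq.inv_add_inv_eq_one
  simp only [mul_one, one_rpow, integral_const, smul_eq_mul, hμ, hq] at H
  simpa only [intervalIntegral.integral_of_le hab, mul_comm] using H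

lemma rpow_le_mul_integral_abs_rpow {g : ℝ → ℝ} (hg : Continuous g) {C : ℝ}
    (hC : ∀ x, |g x| ≤ C) {a b c p : ℝ} (hab : a < b) (hc : 0 ≤ c) (hp : 1 ≤ p)
    (h : b - a ≤ c * ∫ x in a..b, |g x|) :
    (b - a) ^ (1 / p) ≤ c * (∫ x in a..b, |g x| ^ p) ^ (1 / p) := by
  have hba : 0 < b - a := sub_pos.2 hab
  refine le_of_mul_le_mul_left ?_ (rpow_pos_of_pos hba (1 - 1 / p))
  calc (b - a) ^ (1 - 1 / p) * (b - a) ^ (1 / p) = b - a := by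
        rw [← rpow_add hba, sub_add_cancel, rpow_one]
    _ ≤ c * ∫ x in a..b, |g x| := h
    _ ≤ (b - a) ^ (1 - 1 / p) * _ := by
        rw [mul_left_comm]
        gcongr
        exact integral_abs_le_mul_integral_abs_rpow hg hC hab.le hp

lemma one_le_mul_iSup_abs {g : ℝ → ℝ} (hg : Continuous g)
    (hbdd : BddAbove (Set.range fun x => |g x|)) {a b c : ℝ} (hab : a < b) (hc : 0 ≤ c)
    (h : b - a ≤ c * ∫ x in a..b, |g x|) :
    1 ≤ c * ⨆ x, |g x| := by
  refine le_of_mul_le_mul_left ?_ (sub_pos.2 hab)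
  calc (b - a) * 1 ≤ c * ∫ x in a..b, |g x| := (mul_one _).trans_le h
    _ ≤ (b - a) * _ := by
        rw [mul_left_comm]
        gcongr
        exact integral_abs_le_mul_iSup hg hbdd hab.le

/-- The paper's sum over `j ≥ 3`, reindexed by `j ↦ j + 3` so that the frequency
`(11/8)·2^(j+3) = 11·2^j` is a natural number. -/
def lacunaryFreq (j : ℕ) : ℕ := 11 * 2 ^ j

noncomputable def lacunaryCoeff (s : ℝ) (j : ℕ) : ℝ := 2 ^ (-((j : ℝ) + 3) * s)

noncomputable def lacunaryCos (s x : ℝ) : ℝ := ∑' j, lacunaryCoeff s j * cos (lacunaryFreq j * x)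

lemma lacunaryCoeff_pos (s : ℝ) (j : ℕ) : 0 < lacunaryCoeff s j := rpow_pos_of_pos two_pos _

lemma lacunaryFreq_injective : Injective lacunaryFreq := fun i j h => by
  simpa [lacunaryFreq] using h

lemma lacunaryFreq_pos (j : ℕ) : 0 < lacunaryFreq j := by
  unfold lacunaryFreq; positivity

lemma lacunaryCoeff_eq_pow (s : ℝ) (j : ℕ) : lacunaryCoeff s j = (2 ^ (-s)) ^ (j + 3) := by
  rw [lacunaryCoeff, ← rpow_natCast, ← rpow_mul zero_le_two]
  push_cast
  ring_nf

lemma summable_lacunaryCoeff {s : ℝ} (hs : 0 < s) : Summable (lacunaryCoeff s) := by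
  have hr : (2 : ℝ) ^ (-s) < 1 := rpow_lt_one_of_one_lt_of_neg one_lt_two (neg_neg_of_pos hs)
  rw [show lacunaryCoeff s = fun j => (2 ^ (-s)) ^ j * (2 ^ (-s)) ^ 3 from
    funext fun j => by rw [lacunaryCoeff_eq_pow, pow_add]]
  exact (summable_geometric_of_lt_one (by positivity) hr).mul_right _

lemma continuous_lacunaryCos {s : ℝ} (hs : 0 < s) : Continuous (lacunaryCos s) :=
  continuous_tsum_mul_cos (summable_lacunaryCoeff hs) _

/-- `π / lacunaryFreq m` is half a period of the `m`-th mode, so the shift flips its sign;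
orthogonality removes all other modes. -/
lemma integral_lacunaryCos_sub_mul_cos {s : ℝ} (hs : 0 < s) (m : ℕ) :
    ∫ x in (0 : ℝ)..2 * π,
        (lacunaryCos s (x - π / lacunaryFreq m) - lacunaryCos s x) * cos (lacunaryFreq m * x)
      = -(2 * π * lacunaryCoeff s m) := by
  have ha := summable_lacunaryCoeff hs
  have hm : (lacunaryFreq m : ℝ) ≠ 0 := Nat.cast_ne_zero.mpr (lacunaryFreq_pos m).ne'
  have h0 := integral_tsum_mul_cos_mul_cos ha lacunaryFreq_injective 0 (lacunaryFreq_pos m)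
  simp only [sub_zero, mul_zero, cos_zero] at h0
  have hc := continuous_lacunaryCos hs
  simp_rw [sub_mul]
  rw [intervalIntegral.integral_sub (Continuous.intervalIntegrable (by fun_prop) _ _)
    (Continuous.intervalIntegrable (by fun_prop) _ _)]
  unfold lacunaryCos
  rw [integral_tsum_mul_cos_mul_cos ha lacunaryFreq_injective _ (lacunaryFreq_pos m), h0,
    mul_div_cancel₀ _ hm, cos_pi]
  ring

lemma lacunaryCos_eq_tsum (s x : ℝ) :
    lacunaryCos s x
      = ∑' j : ℕ, (2 : ℝ) ^ (-((j : ℝ) + 3) * s) * cos ((11 / 8) * 2 ^ (j + 3) * x) :=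
  tsum_congr fun j => by
    rw [lacunaryCoeff, lacunaryFreq]
    push_cast
    ring_nf

lemma abs_lacunaryCos_sub_le {s : ℝ} (hs : 0 < s) (x y : ℝ) :
    |lacunaryCos s x - lacunaryCos s y| ≤ 2 * ∑' j, |lacunaryCoeff s j| := by
  have ha := summable_lacunaryCoeff hs
  rw [two_mul]
  exact (abs_sub _ _).trans (add_le_add (abs_tsum_mul_cos_le ha _) (abs_tsum_mul_cos_le ha _))

lemma two_pi_le_rpow_mul_integral_abs_lacunaryCos_sub {s : ℝ} (hs : 0 < s) {n : ℕ} (hn : 3 ≤ n) :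
    2 * π ≤ (2 : ℝ) ^ ((n : ℝ) * s)
      * ∫ x in (0 : ℝ)..2 * π, |lacunaryCos s (x - 8 * π / (11 * 2 ^ n)) - lacunaryCos s x| := by
  obtain ⟨m, rfl⟩ := Nat.exists_eq_add_of_le' hn
  have ht : 8 * π / (11 * 2 ^ (m + 3)) = π / lacunaryFreq m := by
    rw [lacunaryFreq]; push_cast; field_simp; ring
  have hscale : (2 : ℝ) ^ (((m + 3 : ℕ) : ℝ) * s) * lacunaryCoeff s m = 1 := by
    rw [lacunaryCoeff, ← rpow_add two_pos]; push_cast; ring_nf; exact rpow_zero 2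
  have hc := continuous_lacunaryCos hs
  have hlow := abs_integral_mul_cos_le (by fun_prop : Continuous fun x =>
    lacunaryCos s (x - π / lacunaryFreq m) - lacunaryCos s x) two_pi_pos.le (lacunaryFreq m)
  rw [integral_lacunaryCos_sub_mul_cos hs, abs_neg,
    abs_of_pos (by have := lacunaryCoeff_pos s m; positivity)] at hlow
  rw [ht]
  calc 2 * π = (2 : ℝ) ^ (((m + 3 : ℕ) : ℝ) * s) * (2 * π * lacunaryCoeff s m) := by
        rw [mul_left_comm, hscale, mul_one]
    _ ≤ _ := by gcongr

/-- For `s > 0`, `f(x) = Σ_{j=3}^∞ 2^{-js} cos((11/8)·2^j·x)` and `t_n = 8π/(11·2^n)`: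
for every `1 ≤ p < ∞` and `n ≥ 3`,
`2^{ns} ‖f(·-t_n) - f‖_{L^p(0,2π)} ≥ (2π)^{1/p}` and
`2^{ns} sup_x |f(x-t_n) - f(x)| ≥ 1`; moreover `t_n → 0⁺` while the weighted
differences do not tend to `0`. -/
theorem stmt_8 (s : ℝ) (hs : 0 < s) (f : ℝ → ℝ)
    (hf : ∀ x : ℝ, f x = ∑' j : ℕ,
      (2 : ℝ) ^ (-(((j : ℝ) + 3)) * s) * Real.cos ((11 / 8) * 2 ^ (j + 3) * x))
    (t : ℕ → ℝ) (ht : ∀ n, t n = 8 * π / (11 * 2 ^ n)) :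
    (∀ p : ℝ, 1 ≤ p → ∀ n : ℕ, 3 ≤ n →
      (2 : ℝ) ^ ((n : ℝ) * s)
          * (∫ x in (0:ℝ)..(2 * π), |f (x - t n) - f x| ^ p) ^ (1 / p)
        ≥ (2 * π) ^ (1 / p)) ∧
    (∀ n : ℕ, 3 ≤ n →
      (2 : ℝ) ^ ((n : ℝ) * s) * (⨆ x : ℝ, |f (x - t n) - f x|) ≥ 1) ∧
    Tendsto t atTop (nhdsWithin 0 (Set.Ioi 0)) ∧
    (∀ p : ℝ, 1 ≤ p →
      ¬ Tendsto (fun n : ℕ =>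
          (2 : ℝ) ^ ((n : ℝ) * s)
            * (∫ x in (0:ℝ)..(2 * π), |f (x - t n) - f x| ^ p) ^ (1 / p))
        atTop (nhds 0)) := by
  obtain rfl : f = lacunaryCos s := funext fun x => (hf x).trans (lacunaryCos_eq_tsum s x).symm
  have hc := continuous_lacunaryCos hs
  have hbound n x := abs_lacunaryCos_sub_le hs (x - t n) x
  have hlow n (hn : 3 ≤ n) := ht n ▸ two_pi_le_rpow_mul_integral_abs_lacunaryCos_sub hs hn
  have hLp p (hp : 1 ≤ p) n (hn : 3 ≤ n) := rpow_le_mul_integral_abs_rpow (by fun_prop)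
    (hbound n) two_pi_pos (c := 2 ^ ((n : ℝ) * s)) (by positivity) hp (by simpa using hlow n hn)
  refine ⟨fun p hp n hn => by simpa using hLp p hp n hn, fun n hn => ?_, ?_, fun p hp hlim => ?_⟩
  · exact one_le_mul_iSup_abs (by fun_prop) ⟨_, Set.forall_mem_range.2 (hbound n)⟩ two_pi_pos
      (c := 2 ^ ((n : ℝ) * s)) (by positivity) (by simpa using hlow n hn)
  · rw [show t = fun n => 8 * π / 11 * (2 ^ n)⁻¹ from funext fun n => by rw [ht]; field_simp]
    refine tendsto_nhdsWithin_iff.2 ⟨?_, .of_forall fun n => Set.mem_Ioi.2 (by positivity)⟩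
    simpa using (tendsto_inv_atTop_zero.comp
      (tendsto_pow_atTop_atTop_of_one_lt one_lt_two)).const_mul (8 * π / 11)
  · have := ge_of_tendsto hlim (eventually_atTop.2 ⟨3, fun n hn => by simpa using hLp p hp n hn⟩)
    exact (rpow_pos_of_pos two_pi_pos _).not_ge this
end

section
/- Let s > 0, let f : ℝ → ℝ be defined by f(x) = Σ_{j=3}^∞ 2^{−js} cos((11/8)·2^j·x), and for n ≥ 3 set λ_n = 1 + 1/n and τ_n = 8nπ/(11·2^n). Then the Fourier coefficient of the 2π-periodic function x ↦ f(x − λ_n τ_n) − f(x − τ_n) at the frequency 11·2^{n−3}, with normalization ĝ(k) = (1/(2π)) ∫₀^{2π} g(x) e^{−ikx} dx, equals (−1)^{n+1}·2^{−ns}; in particular its absolute value is 2^{−ns}. -/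
/-!
The coefficients `2^{-js}` are summable, so the Fourier coefficient of the series may be computed
term by term. The frequencies `11·2^{j-3}` are distinct, so by orthogonality only the term with
frequency `k = 11·2^{n-3}` survives, and a shift by `a` multiplies its contribution
`2^{-ns}/2` by `e^{-ika}`. Since `kτ_n = nπ` and `kλ_nτ_n = (n+1)π`, the two shifts give the phases
`(-1)^{n+1}` and `(-1)^n`, whose difference is `2·(-1)^{n+1}`.
-/

open Real Complex MeasureTheory Function

theorem integral_exp_intCast_mul_I (ℓ : ℤ) :
    ∫ x in (0:ℝ)..2 * π, Complex.exp (ℓ * I * x) = if ℓ = 0 then 2 * (π : ℂ) else 0 := by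
  split_ifs with hℓ
  · simp [hℓ]
  have hc : (ℓ : ℂ) * I ≠ 0 := by simp [hℓ]
  have hperiod : Complex.exp (ℓ * I * (2 * π : ℝ)) = 1 := by
    rw [← exp_int_mul_two_pi_mul_I ℓ]; push_cast; ring_nf
  rw [integral_exp_mul_complex hc, hperiod]
  simp

theorem integral_cos_mul_sub_mul_exp (m : ℕ) {k : ℕ} (hk : 0 < k) (a : ℝ) :
    ∫ x in (0:ℝ)..2 * π, (Real.cos (m * (x - a)) : ℂ) * Complex.exp (-I * k * x)
      = if m = k then π * Complex.exp (-I * k * a) else 0 := by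
  have hexpand : ∀ x : ℝ, (Real.cos (m * (x - a)) : ℂ) * Complex.exp (-I * k * x)
      = Complex.exp (-I * m * a) / 2 * Complex.exp (((m - k : ℤ) : ℂ) * I * x)
        + Complex.exp (I * m * a) / 2 * Complex.exp (((-m - k : ℤ) : ℂ) * I * x) := by
    intro x
    rw [ofReal_cos, Complex.cos, div_mul_eq_mul_div, add_mul, ← Complex.exp_add, ← Complex.exp_add,
      div_mul_eq_mul_div, div_mul_eq_mul_div, ← add_div, ← Complex.exp_add, ← Complex.exp_add]
    congr 3 <;> push_cast <;> ring
  have hint : ∀ (c : ℂ) (ℓ : ℤ),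
      IntervalIntegrable (fun x : ℝ => c * Complex.exp (ℓ * I * x)) volume 0 (2 * π) :=
    fun c ℓ => (by fun_prop : Continuous _).intervalIntegrable _ _
  simp_rw [hexpand]
  rw [intervalIntegral.integral_add (hint _ _) (hint _ _), intervalIntegral.integral_const_mul,
    intervalIntegral.integral_const_mul, integral_exp_intCast_mul_I, integral_exp_intCast_mul_I]
  rcases eq_or_ne m k with rfl | hmk
  · rw [if_pos (sub_self _), if_neg (by omega), if_pos rfl]
    ring
  · rw [if_neg (by omega), if_neg (by omega), if_neg hmk]
    simp

theorem hasSum_intervalIntegral_of_norm_le {ι E : Type*} [Countable ι] [NormedAddCommGroup E]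
    [NormedSpace ℝ E] {μ : Measure ℝ} [IsLocallyFiniteMeasure μ] {F : ι → ℝ → E} {f : ℝ → E}
    {u : ι → ℝ} {a b : ℝ} (hF : ∀ i, Continuous (F i)) (hu : Summable u)
    (hFu : ∀ i x, ‖F i x‖ ≤ u i) (hf : ∀ x, HasSum (fun i => F i x) (f x)) :
    HasSum (fun i => ∫ x in a..b, F i x ∂μ) (∫ x in a..b, f x ∂μ) :=
  intervalIntegral.hasSum_integral_of_dominated_convergence (fun i _ => u i)
    (fun i => (hF i).aestronglyMeasurable) (fun i => .of_forall fun x _ => hFu i x)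
    (.of_forall fun _ _ => hu) intervalIntegrable_const (.of_forall fun x _ => hf x)

theorem norm_mul_cos_le (c x : ℝ) : ‖c * Real.cos x‖ ≤ |c| := by
  simpa [abs_mul] using mul_le_mul_of_nonneg_left (abs_cos_le_one x) (abs_nonneg c)

theorem continuous_tsum_mul_cos_s11 {ι : Type*} {c : ι → ℝ} (hc : Summable c) (m : ι → ℝ) :
    Continuous fun x => ∑' j, c j * Real.cos (m j * x) :=
  continuous_tsum (fun j => by fun_prop) hc.abs fun j x => norm_mul_cos_le _ _

theorem integral_tsum_mul_cos_mul_exp {ι : Type*} [Countable ι] {c : ι → ℝ} (hc : Summable c)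
    {m : ι → ℕ} (hm : Injective m) {j₀ : ι} {k : ℕ} (hk : 0 < k) (hj₀ : m j₀ = k) (a : ℝ) :
    ∫ x in (0:ℝ)..2 * π, ((∑' j, c j * Real.cos (m j * (x - a)) : ℝ) : ℂ) * Complex.exp (-I * k * x)
      = c j₀ * π * Complex.exp (-I * k * a) := by
  classical
  have hunit (x : ℝ) : ‖Complex.exp (-I * k * x)‖ = 1 := by simp [Complex.norm_exp]
  have hsum (x : ℝ) : Summable fun j => c j * Real.cos (m j * (x - a)) :=
    .of_norm_bounded hc.abs fun j => norm_mul_cos_le _ _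
  have htermwise := hasSum_intervalIntegral_of_norm_le (a := 0) (b := 2 * π) (μ := volume)
    (F := fun j x => ((c j * Real.cos (m j * (x - a)) : ℝ) : ℂ) * Complex.exp (-I * k * x))
    (fun j => by fun_prop) hc.abs
    (fun j x => by
      rw [norm_mul, Complex.norm_real, hunit, mul_one]
      exact norm_mul_cos_le _ _)
    (fun x => (Complex.hasSum_ofReal.mpr (hsum x).hasSum).mul_right _)
  refine htermwise.unique ?_
  have hterm (j : ι) : ∫ x in (0:ℝ)..2 * π,
      ((c j * Real.cos (m j * (x - a)) : ℝ) : ℂ) * Complex.exp (-I * k * x)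
        = if j = j₀ then c j₀ * π * Complex.exp (-I * k * a) else 0 := by
    simp_rw [ofReal_mul, mul_assoc (c j : ℂ), intervalIntegral.integral_const_mul,
      integral_cos_mul_sub_mul_exp _ hk, ← hj₀, hm.eq_iff]
    split_ifs with h
    · subst h; ring
    · simp
  simpa only [hterm] using hasSum_ite_eq j₀ _

theorem summable_rpow_neg_natCast_add_mul {b : ℝ} (hb : 1 < b) {s : ℝ} (hs : 0 < s) (t : ℝ) :
    Summable fun j : ℕ => b ^ (-((j : ℝ) + t) * s) := by
  have hb0 : 0 < b := by linarith
  have hr : b ^ (-s) < 1 := rpow_lt_one_of_one_lt_of_neg hb (by linarith)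
  refine ((summable_geometric_of_lt_one (by positivity) hr).mul_left (b ^ (-t * s))).congr
    fun j => ?_
  rw [← rpow_natCast, ← rpow_mul hb0.le, ← rpow_add hb0]
  ring_nf

theorem exp_neg_I_mul_eq_neg_one_pow {k N : ℕ} {t : ℝ} (h : k * t = N * π) :
    Complex.exp (-I * k * t) = (-1) ^ N := by
  have hphase : -I * k * t = N * -(π * I) := by
    rw [mul_assoc, ← ofReal_natCast, ← ofReal_mul, h]
    push_cast
    ring
  rw [hphase, Complex.exp_nat_mul, exp_neg_pi_mul_I]

theorem natCast_mul_div_eq (d : ℕ) :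
    ((11 * 2 ^ d : ℕ) : ℝ) * (8 * ((d + 3 : ℕ) : ℝ) * π / (11 * 2 ^ (d + 3)))
      = ((d + 3 : ℕ) : ℝ) * π := by
  rw [pow_add]
  push_cast
  field_simp
  ring

theorem integral_sub_shifts_mul_exp {g : ℝ → ℝ} (hg : Continuous g) {k : ℕ} {C : ℂ}
    (hC : ∀ a : ℝ, ∫ x in (0:ℝ)..2 * π, (g (x - a) : ℂ) * Complex.exp (-I * k * x)
      = C * Complex.exp (-I * k * a)) (a b : ℝ) :
    ∫ x in (0:ℝ)..2 * π, ((g (x - a) - g (x - b) : ℝ) : ℂ) * Complex.exp (-I * k * x)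
      = C * (Complex.exp (-I * k * a) - Complex.exp (-I * k * b)) := by
  have hint (a : ℝ) : IntervalIntegrable (fun x : ℝ => (g (x - a) : ℂ) * Complex.exp (-I * k * x))
      volume 0 (2 * π) := (by fun_prop : Continuous _).intervalIntegrable _ _
  simp_rw [ofReal_sub, sub_mul]
  rw [intervalIntegral.integral_sub (hint a) (hint b), hC, hC, mul_sub]

/-- For `s > 0`, `f(x) = Σ_{j=3}^∞ 2^{-js} cos((11/8)·2^j·x)`, `λ_n = 1 + 1/n` and
`τ_n = 8nπ/(11·2^n)` (`n ≥ 3`), the Fourier coefficient of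
`x ↦ f(x - λ_n τ_n) - f(x - τ_n)` at frequency `11·2^{n-3}` equals
`(-1)^{n+1}·2^{-ns}`; in particular its absolute value is `2^{-ns}`. -/
theorem stmt_11 (s : ℝ) (hs : 0 < s) (f : ℝ → ℝ)
    (hf : ∀ x : ℝ, f x = ∑' j : ℕ,
      (2 : ℝ) ^ (-(((j : ℝ) + 3)) * s) * Real.cos ((11 / 8) * 2 ^ (j + 3) * x))
    (n : ℕ) (hn : 3 ≤ n) (lam τ : ℝ)
    (hlam : lam = 1 + 1 / (n : ℝ)) (hτ : τ = 8 * (n : ℝ) * π / (11 * 2 ^ n)) :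
    (1 / (2 * (π : ℂ))) * (∫ x in (0:ℝ)..(2 * π),
        ((f (x - lam * τ) - f (x - τ) : ℝ) : ℂ)
          * Complex.exp (-Complex.I * ((11 * 2 ^ (n - 3) : ℕ) : ℂ) * (x : ℂ)))
      = (-1 : ℂ) ^ (n + 1) * ((2 : ℝ) ^ (-(n : ℝ) * s) : ℝ) ∧
    ‖(1 / (2 * (π : ℂ))) * ∫ x in (0:ℝ)..(2 * π),
        ((f (x - lam * τ) - f (x - τ) : ℝ) : ℂ)
          * Complex.exp (-Complex.I * ((11 * 2 ^ (n - 3) : ℕ) : ℂ) * (x : ℂ))‖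
      = (2 : ℝ) ^ (-(n : ℝ) * s) := by
  obtain ⟨d, rfl⟩ : ∃ d, n = d + 3 := ⟨n - 3, by omega⟩
  rw [Nat.add_sub_cancel]
  set k : ℕ := 11 * 2 ^ d
  set c : ℕ → ℝ := fun j => 2 ^ (-((j : ℝ) + 3) * s)
  have hf_series : f = fun x => ∑' j, c j * Real.cos ((11 * 2 ^ j : ℕ) * x) := by
    ext x
    rw [hf]
    congr! 3
    push_cast
    ring_nf
  have hc : Summable c := summable_rpow_neg_natCast_add_mul one_lt_two hs 3
  have hf_cont : Continuous f := hf_series ▸ continuous_tsum_mul_cos_s11 hc _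
  have hcoeff (a : ℝ) : ∫ x in (0:ℝ)..2 * π, (f (x - a) : ℂ) * Complex.exp (-I * k * x)
      = (c d * π : ℂ) * Complex.exp (-I * k * a) := by
    rw [hf_series]
    exact integral_tsum_mul_cos_mul_exp hc (fun i j h => Nat.pow_right_injective le_rfl
      (Nat.eq_of_mul_eq_mul_left (by norm_num) h)) (by positivity) rfl a
  have hkτ : (k : ℝ) * τ = ((d + 3 : ℕ) : ℝ) * π := by
    rw [hτ]
    exact natCast_mul_div_eq d
  have hklamτ : (k : ℝ) * (lam * τ) = ((d + 3 + 1 : ℕ) : ℝ) * π := by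
    rw [mul_left_comm, hkτ, hlam]
    push_cast
    field_simp
  have hcd : c d = 2 ^ (-((d + 3 : ℕ) : ℝ) * s) := by push_cast; rfl
  have hformula : (1 / (2 * (π : ℂ))) * ∫ x in (0:ℝ)..2 * π,
      ((f (x - lam * τ) - f (x - τ) : ℝ) : ℂ) * Complex.exp (-I * k * x)
        = (-1 : ℂ) ^ (d + 3 + 1) * ((2 : ℝ) ^ (-((d + 3 : ℕ) : ℝ) * s) : ℝ) := by
    rw [integral_sub_shifts_mul_exp hf_cont hcoeff, exp_neg_I_mul_eq_neg_one_pow hklamτ,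
      exp_neg_I_mul_eq_neg_one_pow hkτ, hcd, pow_succ]
    field_simp
    ring
  refine ⟨hformula, ?_⟩
  rw [hformula, norm_mul, norm_pow, norm_neg, norm_one, one_pow, one_mul, norm_real,
    Real.norm_of_nonneg (by positivity)]
end

section
/- Let s > 0 and ε > 0, and let f : ℝ → ℝ be defined by f(x) = Σ_{j=3}^∞ 2^{−js} cos((11/8)·2^j·x). Define F : [0,∞) × ℝ → ℝ by F(t,x) = Σ_{j=3}^∞ 2^{−js} e^{−ε(121/64)·2^{2j}·t} cos((11/8)·2^j·(x − t)). Then: (i) the series converges uniformly on [0,∞) × ℝ and F is continuous there; (ii) F(0,x) = f(x) for all x; (iii) for every t > 0, F(t,·) is smooth in x and F satisfies ∂_t F + ∂_x F − ε ∂²_{xx} F = 0 at every point of (0,∞) × ℝ. -/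
open Real Filter

/- ## Auxiliary lemmas -/

lemma sum_a {s : ℝ} (hs : 0 < s) :
    Summable (fun j : ℕ => (2 : ℝ) ^ (-(((j : ℝ) + 3)) * s)) := by
  have h : ∀ j : ℕ, (2 : ℝ) ^ (-(((j : ℝ) + 3)) * s)
      = (2 : ℝ) ^ (-(3*s)) * ((2 : ℝ) ^ (-s)) ^ j := by
    intro j
    rw [← Real.rpow_natCast ((2:ℝ) ^ (-s)) j, ← Real.rpow_mul (by norm_num),
      ← Real.rpow_add (by norm_num)]
    ring_nf
  have hr : (2:ℝ) ^ (-s) < 1 :=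
    Real.rpow_lt_one_of_one_lt_of_neg one_lt_two (by linarith)
  have hr0 : 0 ≤ (2:ℝ) ^ (-s) := (Real.rpow_pos_of_pos two_pos _).le
  simp only [h]
  exact (summable_geometric_of_lt_one hr0 hr).mul_left _

lemma a_le_one {s : ℝ} (hs : 0 < s) (j : ℕ) :
    (2 : ℝ) ^ (-(((j : ℝ) + 3)) * s) ≤ 1 := by
  apply Real.rpow_le_one_of_one_le_of_nonpos one_le_two
  nlinarith [Nat.cast_nonneg (α := ℝ) j]

lemma a_pos (s : ℝ) (j : ℕ) : 0 < (2 : ℝ) ^ (-(((j : ℝ) + 3)) * s) :=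
  Real.rpow_pos_of_pos two_pos _

lemma master_bound {s ε t : ℝ} (hs : 0 < s) (hε : 0 < ε) (ht : 0 < t) (k j : ℕ) :
    (2 : ℝ) ^ (-(((j : ℝ) + 3)) * s) * ((11/8 : ℝ) * 2 ^ (j+3)) ^ k
      * Real.exp (-ε * (121/64) * 2 ^ (2*(j+3)) * t)
    ≤ ((k+1).factorial / (ε*t)^(k+1)) * (1/2 : ℝ) ^ j := by
  set B : ℝ := (11/8 : ℝ) * 2 ^ (j+3) with hB
  have hBpos : 0 < B := by positivity
  have hB1 : (1:ℝ) ≤ B := by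
    rw [hB]; nlinarith [one_le_pow₀ (M₀ := ℝ) (one_le_two) (n := j+3)]
  have hB2j : (2:ℝ) ^ j ≤ B := by
    rw [hB, pow_add]; nlinarith [pow_pos (two_pos (α := ℝ)) j]
  have hBsq : B ^ 2 = (121/64 : ℝ) * 2 ^ (2*(j+3)) := by
    rw [hB, mul_pow, mul_comm 2 (j+3), pow_mul]; norm_num
  set X : ℝ := ε * B^2 * t with hX
  have hXpos : 0 < X := by positivity
  have hexp : Real.exp (-ε * (121/64) * 2 ^ (2*(j+3)) * t) = Real.exp (-X) := by
    rw [hX, hBsq]; ring_nf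
  have hfac : (0:ℝ) < (k+1).factorial := by positivity
  have h1 : X ^ (k+1) / (k+1).factorial ≤ Real.exp X :=
    Real.pow_div_factorial_le_exp _ hXpos.le _
  have h2 : Real.exp (-X) ≤ ((k+1).factorial : ℝ) / X ^ (k+1) := by
    rw [Real.exp_neg, inv_eq_one_div, div_le_div_iff₀ (Real.exp_pos X) (pow_pos hXpos _)]
    rw [div_le_iff₀ hfac] at h1
    linarith
  have hXpow : X ^ (k+1) = (ε*t)^(k+1) * B ^ (2*(k+1)) := by
    rw [hX, pow_mul]; ring
  have key : B ^ k * (((k+1).factorial : ℝ) / X ^ (k+1))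
      ≤ ((k+1).factorial / (ε*t)^(k+1)) * (1/2 : ℝ) ^ j := by
    rw [hXpow]
    have hBk : B ^ k * (((k+1).factorial : ℝ) / ((ε*t)^(k+1) * B ^ (2*(k+1))))
        = ((k+1).factorial / (ε*t)^(k+1)) * (1 / B ^ (k+2)) := by
      have : B ^ (2*(k+1)) = B ^ k * B ^ (k+2) := by rw [← pow_add]; ring_nf
      rw [this]
      field_simp
    rw [hBk]
    apply mul_le_mul_of_nonneg_left _ (by positivity)
    have e1 : (1:ℝ) / B ^ (k+2) ≤ 1 / B := by
      apply one_div_le_one_div_of_le hBpos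
      calc B = B ^ 1 := (pow_one B).symm
        _ ≤ B ^ (k+2) := pow_le_pow_right₀ hB1 (by omega)
    have e2 : (1:ℝ) / B ≤ (1/2)^j := by
      rw [one_div_pow (2:ℝ) j]
      exact one_div_le_one_div_of_le (by positivity) hB2j
    linarith
  calc (2 : ℝ) ^ (-(((j : ℝ) + 3)) * s) * B ^ k * Real.exp (-ε * (121/64) * 2 ^ (2*(j+3)) * t)
      ≤ 1 * B ^ k * (((k+1).factorial : ℝ) / X ^ (k+1)) := by
        rw [hexp]
        apply mul_le_mul (mul_le_mul_of_nonneg_right (a_le_one hs j) (by positivity)) h2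
          (Real.exp_pos _).le (by positivity)
    _ = B ^ k * (((k+1).factorial : ℝ) / X ^ (k+1)) := by ring
    _ ≤ _ := key

lemma master_summable {s ε t : ℝ} (hs : 0 < s) (hε : 0 < ε) (ht : 0 < t) (k : ℕ) :
    Summable (fun j : ℕ => (2 : ℝ) ^ (-(((j : ℝ) + 3)) * s) * ((11/8 : ℝ) * 2 ^ (j+3)) ^ k
      * Real.exp (-ε * (121/64) * 2 ^ (2*(j+3)) * t)) := by
  apply Summable.of_nonneg_of_le (fun j => by positivity) (fun j => master_bound hs hε ht k j)
  exact (summable_geometric_of_lt_one (by norm_num) (by norm_num : (1/2:ℝ) < 1)).mul_left _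

lemma hderiv_x (A B C t x : ℝ) :
    HasDerivAt (fun x => A * C * Real.cos (B * (x - t)))
      (-(A * C * B * Real.sin (B * (x - t)))) x := by
  have h1 : HasDerivAt (fun x : ℝ => B * (x - t)) B x := by
    simpa using ((hasDerivAt_id x).sub_const t).const_mul B
  have h2 := (Real.hasDerivAt_cos (B * (x - t))).comp x h1
  have := h2.const_mul (A * C)
  exact this.congr_deriv (by ring)

lemma hderiv_xx (A B C t x : ℝ) :
    HasDerivAt (fun x => -(A * C * B * Real.sin (B * (x - t))))
      (-(A * C * B^2 * Real.cos (B * (x - t)))) x := by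
  have h1 : HasDerivAt (fun x : ℝ => B * (x - t)) B x := by
    simpa using ((hasDerivAt_id x).sub_const t).const_mul B
  have h2 := (Real.hasDerivAt_sin (B * (x - t))).comp x h1
  have := (h2.const_mul (A * C * B)).neg
  exact this.congr_deriv (by ring)

lemma hderiv_t (A B c x τ : ℝ) :
    HasDerivAt (fun τ => A * Real.exp (-c * τ) * Real.cos (B * (x - τ)))
      (A * Real.exp (-c * τ) * (B * Real.sin (B * (x - τ)) - c * Real.cos (B * (x - τ)))) τ := by
  have h1 : HasDerivAt (fun τ : ℝ => -c * τ) (-c) τ := by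
    simpa using (hasDerivAt_id τ).const_mul (-c)
  have hexp : HasDerivAt (fun τ : ℝ => Real.exp (-c * τ)) (Real.exp (-c * τ) * (-c)) τ :=
    (Real.hasDerivAt_exp (-c * τ)).comp τ h1
  have h2 : HasDerivAt (fun τ : ℝ => B * (x - τ)) (-B) τ := by
    simpa using ((hasDerivAt_id τ).const_sub x).const_mul B
  have hcos : HasDerivAt (fun τ : ℝ => Real.cos (B * (x - τ)))
      (-Real.sin (B * (x - τ)) * (-B)) τ :=
    ((Real.hasDerivAt_cos (B * (x - τ))).comp τ h2 :)
  have h := (hexp.mul hcos).const_mul A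
  have hfun : (fun y => A * (Real.exp (-c*y) * Real.cos (B*(x-y))))
      = (fun τ => A * Real.exp (-c*τ) * Real.cos (B*(x-τ))) := by funext y; ring
  rw [← hfun]
  exact h.congr_deriv (by ring)

lemma hd_cos_lin (C B ψ x : ℝ) :
    HasDerivAt (fun x => C * Real.cos (B * x + ψ)) (-(C * B * Real.sin (B * x + ψ))) x := by
  have h1 : HasDerivAt (fun x : ℝ => B * x + ψ) B x := by
    simpa using ((hasDerivAt_id x).const_mul B).add_const ψ
  have h2 := ((Real.hasDerivAt_cos (B * x + ψ)).comp x h1).const_mul C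
  exact h2.congr_deriv (by ring)

lemma iter_cos (A B φ : ℝ) : ∀ k : ℕ, iteratedDeriv k (fun x => A * Real.cos (B * x + φ))
    = fun x => A * B ^ k * Real.cos (B * x + (φ + k * (π/2)))
  | 0 => by funext x; simp
  | (k+1) => by
    rw [iteratedDeriv_succ, iter_cos A B φ k]
    funext x
    rw [(hd_cos_lin (A * B ^ k) B (φ + k * (π/2)) x).deriv]
    have harg : B * x + (φ + ((k:ℝ)+1) * (π/2)) = (B * x + (φ + k * (π/2))) + π/2 := by ring
    push_cast
    rw [harg, Real.cos_add_pi_div_two]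
    ring

lemma smooth_cos_lin (C B ψ : ℝ) : ContDiff ℝ (⊤ : ℕ∞) (fun x : ℝ => C * Real.cos (B * x + ψ)) :=
  contDiff_const.mul (Real.contDiff_cos.comp ((contDiff_id.const_smul B).add contDiff_const))

lemma iter_bound (A B φ : ℝ) (hA : 0 ≤ A) (hB : 0 ≤ B) (k : ℕ) (x : ℝ) :
    ‖iteratedFDeriv ℝ k (fun x => A * Real.cos (B * x + φ)) x‖ ≤ A * B ^ k := by
  rw [norm_iteratedFDeriv_eq_norm_iteratedDeriv, iter_cos A B φ k]
  rw [Real.norm_eq_abs, abs_mul]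
  calc |A * B ^ k| * |Real.cos (B * x + (φ + k * (π/2)))| ≤ |A * B ^ k| * 1 :=
        mul_le_mul_of_nonneg_left (Real.abs_cos_le_one _) (abs_nonneg _)
    _ = A * B ^ k := by rw [mul_one, abs_of_nonneg (by positivity)]

lemma habs' {s ε : ℝ} (hs : 0 < s) (hε : 0 < ε) (j : ℕ) (t x : ℝ) (ht : 0 ≤ t) :
    ‖(2 : ℝ) ^ (-(((j : ℝ) + 3)) * s) * Real.exp (-ε * (121 / 64) * 2 ^ (2 * (j + 3)) * t)
      * Real.cos ((11 / 8) * 2 ^ (j + 3) * (x - t))‖ ≤ (2 : ℝ) ^ (-(((j : ℝ) + 3)) * s) := by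
  have hexp : Real.exp (-ε * (121 / 64) * 2 ^ (2 * (j + 3)) * t) ≤ 1 := by
    rw [Real.exp_le_one_iff]
    have h0 : 0 ≤ ε * (121/64) * (2:ℝ) ^ (2*(j+3)) * t := by positivity
    linarith
  have hexp0 := (Real.exp_pos (-ε * (121 / 64) * 2 ^ (2 * (j + 3)) * t)).le
  rw [Real.norm_eq_abs, abs_mul, abs_mul,
    abs_of_nonneg (a_pos s j).le, abs_of_nonneg hexp0]
  have hcos := Real.abs_cos_le_one ((11 / 8) * 2 ^ (j + 3) * (x - t))
  calc (2 : ℝ) ^ (-(((j : ℝ) + 3)) * s) * Real.exp (-ε * (121 / 64) * 2 ^ (2 * (j + 3)) * t)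
        * |Real.cos ((11 / 8) * 2 ^ (j + 3) * (x - t))|
      ≤ (2 : ℝ) ^ (-(((j : ℝ) + 3)) * s) * Real.exp (-ε * (121 / 64) * 2 ^ (2 * (j + 3)) * t)
        * 1 := mul_le_mul_of_nonneg_left hcos (by positivity)
    _ = (2 : ℝ) ^ (-(((j : ℝ) + 3)) * s) * Real.exp (-ε * (121 / 64) * 2 ^ (2 * (j + 3)) * t) :=
        mul_one _
    _ ≤ (2 : ℝ) ^ (-(((j : ℝ) + 3)) * s) * 1 := mul_le_mul_of_nonneg_left hexp (a_pos s j).le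
    _ = _ := mul_one _

lemma norm_cos_le_exp (w : ℂ) : ‖Complex.cos w‖ ≤ Real.exp ‖w‖ := by
  rw [Complex.cos]
  calc ‖(Complex.exp (w * Complex.I) + Complex.exp (-w * Complex.I)) / 2‖
      ≤ (‖Complex.exp (w * Complex.I)‖ + ‖Complex.exp (-w * Complex.I)‖) / 2 := by
        rw [norm_div]
        gcongr
        · exact norm_add_le _ _
        · simp
    _ ≤ (Real.exp ‖w‖ + Real.exp ‖w‖) / 2 := by
        gcongr <;>
        · rw [Complex.norm_exp]
          apply Real.exp_le_exp.2
          simp only [Complex.mul_I_re, Complex.neg_re, Complex.neg_im, neg_neg]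
          calc _ ≤ |w.im| := by cases abs_cases w.im <;> linarith
            _ ≤ ‖w‖ := Complex.abs_im_le_norm w
            _ = ‖w‖ := rfl
    _ = Real.exp ‖w‖ := by ring

lemma complex_term_bound {s ε t M : ℝ} (hε : 0 < ε) (ht : 0 < t) (hM : 0 < M)
    (j : ℕ) {z : ℂ} (hz : ‖z - (t:ℂ)‖ ≤ M) :
    ‖(((2:ℝ) ^ (-(((j:ℝ)+3)) * s) * Real.exp (-ε * (121/64) * 2 ^ (2*(j+3)) * t) : ℝ) : ℂ)
      * Complex.cos ((((11/8 : ℝ) * 2 ^ (j+3) : ℝ) : ℂ) * (z - (t:ℂ)))‖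
    ≤ Real.exp (M^2 / (2*ε*t)) * ((2:ℝ) ^ (-(((j:ℝ)+3)) * s)
        * ((11/8 : ℝ) * 2 ^ (j+3)) ^ 0 * Real.exp (-ε * (121/64) * 2 ^ (2*(j+3)) * (t/2))) := by
  set A : ℝ := (2:ℝ) ^ (-(((j:ℝ)+3)) * s) with hA
  set B : ℝ := (11/8 : ℝ) * 2 ^ (j+3) with hB
  have hApos : 0 < A := a_pos s j
  have hBpos : 0 < B := by rw [hB]; positivity
  have hBsq : B ^ 2 = (121/64 : ℝ) * 2 ^ (2*(j+3)) := by
    rw [hB, mul_pow, mul_comm 2 (j+3), pow_mul]; norm_num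
  -- norm of the cosine argument
  have harg : ‖(((B : ℝ)) : ℂ) * (z - (t:ℂ))‖ ≤ B * M := by
    rw [norm_mul, Complex.norm_real, Real.norm_eq_abs, abs_of_pos hBpos]
    exact mul_le_mul_of_nonneg_left hz hBpos.le
  have hcos : ‖Complex.cos ((((B : ℝ)) : ℂ) * (z - (t:ℂ)))‖ ≤ Real.exp (B * M) :=
    (norm_cos_le_exp _).trans (Real.exp_le_exp.2 harg)
  -- key scalar inequality
  have hkey : B * M ≤ M^2 / (2*ε*t) + ε * B^2 * t / 2 := by
    have h2εt : (0:ℝ) < 2*ε*t := by positivity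
    have h1 : B * M * (2*ε*t) ≤ M^2 + ε^2 * t^2 * B^2 := by nlinarith [sq_nonneg (M - ε*t*B)]
    calc B * M = (B * M * (2*ε*t)) / (2*ε*t) := by field_simp
      _ ≤ (M^2 + ε^2 * t^2 * B^2) / (2*ε*t) := by
          exact div_le_div_of_nonneg_right h1 h2εt.le
      _ = M^2 / (2*ε*t) + ε * B^2 * t / 2 := by field_simp
  -- assemble
  have hE : Real.exp (-ε * (121/64) * 2 ^ (2*(j+3)) * t) * Real.exp (B * M)
      ≤ Real.exp (M^2 / (2*ε*t)) * Real.exp (-ε * (121/64) * 2 ^ (2*(j+3)) * (t/2)) := by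
    rw [← Real.exp_add, ← Real.exp_add]
    apply Real.exp_le_exp.2
    have : -ε * (121/64) * 2 ^ (2*(j+3)) * t = -(ε * B^2 * t) := by rw [hBsq]; ring
    rw [this, show -ε * (121/64) * (2:ℝ) ^ (2*(j+3)) * (t/2) = -(ε * B^2 * t)/2 by
      rw [hBsq]; ring]
    linarith
  calc ‖((A * Real.exp (-ε * (121/64) * 2 ^ (2*(j+3)) * t) : ℝ) : ℂ)
        * Complex.cos ((((B : ℝ)) : ℂ) * (z - (t:ℂ)))‖
      = (A * Real.exp (-ε * (121/64) * 2 ^ (2*(j+3)) * t))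
        * ‖Complex.cos ((((B : ℝ)) : ℂ) * (z - (t:ℂ)))‖ := by
        rw [norm_mul, Complex.norm_real, Real.norm_eq_abs, abs_of_pos (by positivity)]
    _ ≤ (A * Real.exp (-ε * (121/64) * 2 ^ (2*(j+3)) * t)) * Real.exp (B * M) := by
        exact mul_le_mul_of_nonneg_left hcos (by positivity)
    _ = A * (Real.exp (-ε * (121/64) * 2 ^ (2*(j+3)) * t) * Real.exp (B * M)) := by ring
    _ ≤ A * (Real.exp (M^2 / (2*ε*t)) * Real.exp (-ε * (121/64) * 2 ^ (2*(j+3)) * (t/2))) :=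
        mul_le_mul_of_nonneg_left hE hApos.le
    _ = Real.exp (M^2 / (2*ε*t)) * (A * B ^ 0 * Real.exp (-ε * (121/64) * 2 ^ (2*(j+3)) * (t/2)))
        := by rw [pow_zero]; ring

lemma norm_bound1 {A C B : ℝ} (hA : 0 ≤ A) (hC : 0 ≤ C) (hB : 0 ≤ B) (θ : ℝ) :
    ‖-(A * C * B * Real.sin θ)‖ ≤ A * B ^ 1 * C := by
  rw [norm_neg, Real.norm_eq_abs, abs_mul]
  calc |A * C * B| * |Real.sin θ| ≤ |A * C * B| * 1 :=
        mul_le_mul_of_nonneg_left (Real.abs_sin_le_one θ) (abs_nonneg _)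
    _ = A * B ^ 1 * C := by rw [mul_one, abs_of_nonneg (by positivity)]; ring

lemma norm_bound2 {A C B : ℝ} (hA : 0 ≤ A) (hC : 0 ≤ C) (hB : 0 ≤ B) (θ : ℝ) :
    ‖-(A * C * B ^ 2 * Real.cos θ)‖ ≤ A * B ^ 2 * C := by
  rw [norm_neg, Real.norm_eq_abs, abs_mul]
  calc |A * C * B ^ 2| * |Real.cos θ| ≤ |A * C * B ^ 2| * 1 :=
        mul_le_mul_of_nonneg_left (Real.abs_cos_le_one θ) (abs_nonneg _)
    _ = A * B ^ 2 * C := by rw [mul_one, abs_of_nonneg (by positivity)]; ring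


lemma smooth_part {s ε t : ℝ} (hs : 0 < s) (hε : 0 < ε) (ht : 0 < t) :
    ContDiff ℝ (⊤ : ℕ∞) (fun x : ℝ => ∑' j : ℕ,
      (2 : ℝ) ^ (-(((j : ℝ) + 3)) * s) * Real.exp (-ε * (121 / 64) * 2 ^ (2 * (j + 3)) * t)
        * Real.cos ((11 / 8) * 2 ^ (j + 3) * (x - t))) := by
  set G : ℂ → ℂ := fun z => ∑' j : ℕ,
    (((2:ℝ) ^ (-(((j:ℝ)+3)) * s) * Real.exp (-ε * (121/64) * 2 ^ (2*(j+3)) * t) : ℝ) : ℂ)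
      * Complex.cos ((((11/8 : ℝ) * 2 ^ (j+3) : ℝ) : ℂ) * (z - (t:ℂ))) with hGdef
  have hdiff : Differentiable ℂ G := by
    intro z0
    set R : ℝ := ‖z0‖ + 1 with hR
    set M : ℝ := R + t with hM
    have hMpos : 0 < M := by positivity
    have hDR : DifferentiableOn ℂ G (Metric.ball 0 R) := by
      rw [hGdef]
      apply Complex.differentiableOn_tsum_of_summable_norm
        (F := fun (j : ℕ) (z : ℂ) =>
          (((2:ℝ) ^ (-(((j:ℝ)+3)) * s) * Real.exp (-ε * (121/64) * 2 ^ (2*(j+3)) * t) : ℝ) : ℂ)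
            * Complex.cos ((((11/8 : ℝ) * 2 ^ (j+3) : ℝ) : ℂ) * (z - (t:ℂ))))
        (u := fun j => Real.exp (M^2 / (2*ε*t)) * ((2:ℝ) ^ (-(((j:ℝ)+3)) * s)
          * ((11/8 : ℝ) * 2 ^ (j+3)) ^ 0 * Real.exp (-ε * (121/64) * 2 ^ (2*(j+3)) * (t/2))))
      · exact (master_summable hs hε (half_pos ht) 0).mul_left _
      · intro j
        apply Differentiable.differentiableOn
        exact (Complex.differentiable_cos.comp
          ((differentiable_id.sub_const _).const_mul _)).const_mul _
      · exact Metric.isOpen_ball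
      · intro j w hw
        apply complex_term_bound hε ht hMpos j
        rw [Metric.mem_ball, dist_zero_right] at hw
        calc ‖w - (t:ℂ)‖ ≤ ‖w‖ + ‖(t:ℂ)‖ := norm_sub_le _ _
          _ ≤ R + t := by
              rw [Complex.norm_real, Real.norm_eq_abs, abs_of_pos ht]
              linarith
    exact hDR.differentiableAt (Metric.isOpen_ball.mem_nhds
      (by rw [Metric.mem_ball, dist_zero_right, hR]; linarith))
  have hGan : AnalyticOnNhd ℂ G Set.univ :=
    hdiff.differentiableOn.analyticOnNhd isOpen_univ
  have heq : (fun x : ℝ => ∑' j : ℕ,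
      (2 : ℝ) ^ (-(((j : ℝ) + 3)) * s) * Real.exp (-ε * (121 / 64) * 2 ^ (2 * (j + 3)) * t)
        * Real.cos ((11 / 8) * 2 ^ (j + 3) * (x - t)))
      = fun x : ℝ => Complex.reCLM (G (Complex.ofRealCLM x)) := by
    funext x
    have hsum : Summable (fun j : ℕ =>
        (2 : ℝ) ^ (-(((j : ℝ) + 3)) * s) * Real.exp (-ε * (121 / 64) * 2 ^ (2 * (j + 3)) * t)
          * Real.cos ((11 / 8) * 2 ^ (j + 3) * (x - t))) :=
      (sum_a hs).of_norm_bounded (fun j => habs' hs hε j t x ht.le)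
    have hGx : G (Complex.ofRealCLM x) = ((∑' j : ℕ,
        (2 : ℝ) ^ (-(((j : ℝ) + 3)) * s) * Real.exp (-ε * (121 / 64) * 2 ^ (2 * (j + 3)) * t)
          * Real.cos ((11 / 8) * 2 ^ (j + 3) * (x - t)) : ℝ) : ℂ) := by
      rw [hGdef]
      have hmap := Complex.ofRealCLM.map_tsum hsum
      simp only [Complex.ofRealCLM_apply] at hmap ⊢
      rw [hmap]
      apply tsum_congr
      intro j
      push_cast
      ring
    rw [hGx]
    simp
  rw [heq]
  have h1 : AnalyticOnNhd ℝ G Set.univ := hGan.restrictScalars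
  have h2 := ((Complex.reCLM.analyticOnNhd Set.univ).comp
    (h1.comp (Complex.ofRealCLM.analyticOnNhd Set.univ) (Set.mapsTo_univ _ _))
    (Set.mapsTo_univ _ _))
  exact h2.contDiff

lemma pde_part {s ε t : ℝ} (hs : 0 < s) (hε : 0 < ε) (ht : 0 < t) (x : ℝ) :
    deriv (fun τ => ∑' j : ℕ,
      (2 : ℝ) ^ (-(((j : ℝ) + 3)) * s) * Real.exp (-ε * (121 / 64) * 2 ^ (2 * (j + 3)) * τ)
        * Real.cos ((11 / 8) * 2 ^ (j + 3) * (x - τ))) t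
    + deriv (fun y => ∑' j : ℕ,
      (2 : ℝ) ^ (-(((j : ℝ) + 3)) * s) * Real.exp (-ε * (121 / 64) * 2 ^ (2 * (j + 3)) * t)
        * Real.cos ((11 / 8) * 2 ^ (j + 3) * (y - t))) x
    - ε * deriv (deriv (fun y => ∑' j : ℕ,
      (2 : ℝ) ^ (-(((j : ℝ) + 3)) * s) * Real.exp (-ε * (121 / 64) * 2 ^ (2 * (j + 3)) * t)
        * Real.cos ((11 / 8) * 2 ^ (j + 3) * (y - t))) ) x = 0 := by
  have hcB : ∀ j : ℕ, ε * ((11/8 : ℝ) * 2 ^ (j+3)) ^ 2 = ε * (121/64) * 2 ^ (2*(j+3)) := by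
    intro j
    rw [mul_pow, mul_comm 2 (j+3), pow_mul]
    norm_num; ring
  -- abbreviations (statement-exact forms)
  -- summable bounds
  have hu1 : Summable (fun j : ℕ => (2 : ℝ) ^ (-(((j : ℝ) + 3)) * s)
      * ((11/8 : ℝ) * 2 ^ (j+3)) ^ 1 * Real.exp (-ε * (121/64) * 2 ^ (2*(j+3)) * t)) :=
    master_summable hs hε ht 1
  have hu2 : Summable (fun j : ℕ => (2 : ℝ) ^ (-(((j : ℝ) + 3)) * s)
      * ((11/8 : ℝ) * 2 ^ (j+3)) ^ 2 * Real.exp (-ε * (121/64) * 2 ^ (2*(j+3)) * t)) :=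
    master_summable hs hε ht 2
  have hg0 : Summable (fun j : ℕ => (2 : ℝ) ^ (-(((j : ℝ) + 3)) * s)
      * Real.exp (-ε * (121 / 64) * 2 ^ (2 * (j + 3)) * t)
      * Real.cos ((11 / 8) * 2 ^ (j + 3) * (x - t))) :=
    (sum_a hs).of_norm_bounded (fun j => habs' hs hε j t x ht.le)
  -- first x-derivative
  have hd1 : ∀ y : ℝ, HasDerivAt (fun y => ∑' j : ℕ,
      (2 : ℝ) ^ (-(((j : ℝ) + 3)) * s) * Real.exp (-ε * (121 / 64) * 2 ^ (2 * (j + 3)) * t)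
        * Real.cos ((11 / 8) * 2 ^ (j + 3) * (y - t)))
      (∑' j : ℕ, -((2 : ℝ) ^ (-(((j : ℝ) + 3)) * s)
        * Real.exp (-ε * (121 / 64) * 2 ^ (2 * (j + 3)) * t) * ((11 / 8) * 2 ^ (j + 3))
        * Real.sin ((11 / 8) * 2 ^ (j + 3) * (y - t)))) y := by
    intro y
    apply hasDerivAt_tsum hu1 (fun j y => hderiv_x _ _ _ _ _) _ (y₀ := x) hg0 y
    intro j y
    exact norm_bound1 (a_pos s j).le (Real.exp_pos _).le (by positivity) _
  have hD1 : deriv (fun y => ∑' j : ℕ,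
      (2 : ℝ) ^ (-(((j : ℝ) + 3)) * s) * Real.exp (-ε * (121 / 64) * 2 ^ (2 * (j + 3)) * t)
        * Real.cos ((11 / 8) * 2 ^ (j + 3) * (y - t)))
      = fun y => ∑' j : ℕ, -((2 : ℝ) ^ (-(((j : ℝ) + 3)) * s)
        * Real.exp (-ε * (121 / 64) * 2 ^ (2 * (j + 3)) * t) * ((11 / 8) * 2 ^ (j + 3))
        * Real.sin ((11 / 8) * 2 ^ (j + 3) * (y - t))) :=
    funext fun y => (hd1 y).deriv
  -- summability of the Q terms at x
  have hQ0 : Summable (fun j : ℕ => -((2 : ℝ) ^ (-(((j : ℝ) + 3)) * s)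
      * Real.exp (-ε * (121 / 64) * 2 ^ (2 * (j + 3)) * t) * ((11 / 8) * 2 ^ (j + 3))
      * Real.sin ((11 / 8) * 2 ^ (j + 3) * (x - t)))) :=
    hu1.of_norm_bounded (fun j =>
      norm_bound1 (a_pos s j).le (Real.exp_pos _).le (by positivity) _)
  -- second x-derivative
  have hd2 : HasDerivAt (fun y => ∑' j : ℕ, -((2 : ℝ) ^ (-(((j : ℝ) + 3)) * s)
        * Real.exp (-ε * (121 / 64) * 2 ^ (2 * (j + 3)) * t) * ((11 / 8) * 2 ^ (j + 3))
        * Real.sin ((11 / 8) * 2 ^ (j + 3) * (y - t))))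
      (∑' j : ℕ, -((2 : ℝ) ^ (-(((j : ℝ) + 3)) * s)
        * Real.exp (-ε * (121 / 64) * 2 ^ (2 * (j + 3)) * t) * ((11 / 8) * 2 ^ (j + 3)) ^ 2
        * Real.cos ((11 / 8) * 2 ^ (j + 3) * (x - t)))) x := by
    apply hasDerivAt_tsum hu2 (fun j y => hderiv_xx _ _ _ _ _) _ (y₀ := x) hQ0 x
    intro j y
    exact norm_bound2 (a_pos s j).le (Real.exp_pos _).le (by positivity) _
  -- t-derivative
  have hfunt : (fun τ => ∑' j : ℕ,
      (2 : ℝ) ^ (-(((j : ℝ) + 3)) * s) * Real.exp (-ε * (121 / 64) * 2 ^ (2 * (j + 3)) * τ)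
        * Real.cos ((11 / 8) * 2 ^ (j + 3) * (x - τ)))
      = (fun τ => ∑' j : ℕ,
      (2 : ℝ) ^ (-(((j : ℝ) + 3)) * s)
        * Real.exp (-(ε * (121 / 64) * 2 ^ (2 * (j + 3))) * τ)
        * Real.cos ((11 / 8) * 2 ^ (j + 3) * (x - τ))) := by
    funext τ
    exact tsum_congr fun j => by
      rw [show -ε * (121/64) * (2:ℝ) ^ (2*(j+3)) * τ
        = -(ε * (121/64) * (2:ℝ) ^ (2*(j+3))) * τ by ring]
  have hboundT : ∀ (j : ℕ) (τ : ℝ), τ ∈ Set.Ioi (t/2) →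
      ‖(2 : ℝ) ^ (-(((j : ℝ) + 3)) * s)
        * Real.exp (-(ε * (121 / 64) * 2 ^ (2 * (j + 3))) * τ)
        * (((11 / 8) * 2 ^ (j + 3)) * Real.sin ((11 / 8) * 2 ^ (j + 3) * (x - τ))
          - (ε * (121 / 64) * 2 ^ (2 * (j + 3)))
            * Real.cos ((11 / 8) * 2 ^ (j + 3) * (x - τ)))‖
      ≤ (2 : ℝ) ^ (-(((j : ℝ) + 3)) * s) * ((11/8 : ℝ) * 2 ^ (j+3)) ^ 1
          * Real.exp (-ε * (121/64) * 2 ^ (2*(j+3)) * (t/2))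
        + ε * ((2 : ℝ) ^ (-(((j : ℝ) + 3)) * s) * ((11/8 : ℝ) * 2 ^ (j+3)) ^ 2
          * Real.exp (-ε * (121/64) * 2 ^ (2*(j+3)) * (t/2))) := by
    intro j τ hτ
    rw [Set.mem_Ioi] at hτ
    set A : ℝ := (2 : ℝ) ^ (-(((j : ℝ) + 3)) * s) with hA
    set B : ℝ := (11/8 : ℝ) * 2 ^ (j+3) with hB
    set c : ℝ := ε * (121 / 64) * 2 ^ (2 * (j + 3)) with hc
    have hApos : 0 < A := a_pos s j
    have hBpos : 0 < B := by rw [hB]; positivity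
    have hcpos : 0 < c := by rw [hc]; positivity
    have hcB2 : c = ε * B ^ 2 := by rw [hc, hB]; rw [mul_pow, mul_comm 2 (j+3), pow_mul]; norm_num; ring
    have hexp : Real.exp (-c * τ) ≤ Real.exp (-ε * (121/64) * 2 ^ (2*(j+3)) * (t/2)) := by
      apply Real.exp_le_exp.2
      rw [show -ε * (121/64) * (2:ℝ) ^ (2*(j+3)) * (t/2) = -c * (t/2) by rw [hc]; ring]
      nlinarith
    have htrig : |B * Real.sin (B * (x - τ)) - c * Real.cos (B * (x - τ))| ≤ B + c := by
      calc |B * Real.sin (B * (x - τ)) - c * Real.cos (B * (x - τ))|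
          ≤ |B * Real.sin (B * (x - τ))| + |c * Real.cos (B * (x - τ))| := abs_sub _ _
        _ ≤ B * 1 + c * 1 := by
            rw [abs_mul B, abs_mul c, abs_of_pos hBpos, abs_of_pos hcpos]
            exact add_le_add (mul_le_mul_of_nonneg_left (Real.abs_sin_le_one _) hBpos.le)
              (mul_le_mul_of_nonneg_left (Real.abs_cos_le_one _) hcpos.le)
        _ = B + c := by ring
    rw [Real.norm_eq_abs, abs_mul, abs_mul, abs_of_pos hApos,
      abs_of_pos (Real.exp_pos _)]
    calc A * Real.exp (-c * τ) * |B * Real.sin (B * (x - τ)) - c * Real.cos (B * (x - τ))|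
        ≤ A * Real.exp (-c * τ) * (B + c) :=
          mul_le_mul_of_nonneg_left htrig (by positivity)
      _ ≤ A * Real.exp (-ε * (121/64) * 2 ^ (2*(j+3)) * (t/2)) * (B + c) := by
          apply mul_le_mul_of_nonneg_right (mul_le_mul_of_nonneg_left hexp hApos.le)
            (by positivity)
      _ = A * B ^ 1 * Real.exp (-ε * (121/64) * 2 ^ (2*(j+3)) * (t/2))
          + ε * (A * B ^ 2 * Real.exp (-ε * (121/64) * 2 ^ (2*(j+3)) * (t/2))) := by
          rw [hcB2]; ring
  have huT : Summable (fun j : ℕ =>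
      (2 : ℝ) ^ (-(((j : ℝ) + 3)) * s) * ((11/8 : ℝ) * 2 ^ (j+3)) ^ 1
          * Real.exp (-ε * (121/64) * 2 ^ (2*(j+3)) * (t/2))
        + ε * ((2 : ℝ) ^ (-(((j : ℝ) + 3)) * s) * ((11/8 : ℝ) * 2 ^ (j+3)) ^ 2
          * Real.exp (-ε * (121/64) * 2 ^ (2*(j+3)) * (t/2)))) :=
    (master_summable hs hε (half_pos ht) 1).add
      ((master_summable hs hε (half_pos ht) 2).mul_left ε)
  have hg0t : Summable (fun j : ℕ => (2 : ℝ) ^ (-(((j : ℝ) + 3)) * s)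
      * Real.exp (-(ε * (121 / 64) * 2 ^ (2 * (j + 3))) * t)
      * Real.cos ((11 / 8) * 2 ^ (j + 3) * (x - t))) := by
    apply hg0.congr
    intro j
    rw [show -(ε * (121/64) * (2:ℝ) ^ (2*(j+3))) * t
      = -ε * (121/64) * (2:ℝ) ^ (2*(j+3)) * t by ring]
  have hdT : HasDerivAt (fun τ => ∑' j : ℕ,
      (2 : ℝ) ^ (-(((j : ℝ) + 3)) * s)
        * Real.exp (-(ε * (121 / 64) * 2 ^ (2 * (j + 3))) * τ)
        * Real.cos ((11 / 8) * 2 ^ (j + 3) * (x - τ)))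
      (∑' j : ℕ, (2 : ℝ) ^ (-(((j : ℝ) + 3)) * s)
        * Real.exp (-(ε * (121 / 64) * 2 ^ (2 * (j + 3))) * t)
        * (((11 / 8) * 2 ^ (j + 3)) * Real.sin ((11 / 8) * 2 ^ (j + 3) * (x - t))
          - (ε * (121 / 64) * 2 ^ (2 * (j + 3)))
            * Real.cos ((11 / 8) * 2 ^ (j + 3) * (x - t)))) t := by
    apply hasDerivAt_tsum_of_isPreconnected huT isOpen_Ioi isPreconnected_Ioi
      (fun j τ _ => hderiv_t _ _ _ _ _) hboundT
      (Set.mem_Ioi.2 (half_lt_self ht)) hg0t (Set.mem_Ioi.2 (half_lt_self ht))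
  -- assemble
  rw [hfunt, hdT.deriv, (hd1 x).deriv, hD1, hd2.deriv]
  -- summabilities for combining tsums
  have ST : Summable (fun j : ℕ => (2 : ℝ) ^ (-(((j : ℝ) + 3)) * s)
      * Real.exp (-(ε * (121 / 64) * 2 ^ (2 * (j + 3))) * t)
      * (((11 / 8) * 2 ^ (j + 3)) * Real.sin ((11 / 8) * 2 ^ (j + 3) * (x - t))
        - (ε * (121 / 64) * 2 ^ (2 * (j + 3)))
          * Real.cos ((11 / 8) * 2 ^ (j + 3) * (x - t)))) :=
    huT.of_norm_bounded (fun j => hboundT j t (Set.mem_Ioi.2 (half_lt_self ht)))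
  have SR : Summable (fun j : ℕ => -((2 : ℝ) ^ (-(((j : ℝ) + 3)) * s)
      * Real.exp (-ε * (121 / 64) * 2 ^ (2 * (j + 3)) * t) * ((11 / 8) * 2 ^ (j + 3)) ^ 2
      * Real.cos ((11 / 8) * 2 ^ (j + 3) * (x - t)))) :=
    hu2.of_norm_bounded (fun j =>
      norm_bound2 (a_pos s j).le (Real.exp_pos _).le (by positivity) _)
  rw [← Summable.tsum_add ST hQ0, ← tsum_mul_left, ← Summable.tsum_sub (ST.add hQ0) (SR.mul_left ε)]
  have : ∀ j : ℕ, ((2 : ℝ) ^ (-(((j : ℝ) + 3)) * s)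
      * Real.exp (-(ε * (121 / 64) * 2 ^ (2 * (j + 3))) * t)
      * (((11 / 8) * 2 ^ (j + 3)) * Real.sin ((11 / 8) * 2 ^ (j + 3) * (x - t))
        - (ε * (121 / 64) * 2 ^ (2 * (j + 3)))
          * Real.cos ((11 / 8) * 2 ^ (j + 3) * (x - t)))
      + -((2 : ℝ) ^ (-(((j : ℝ) + 3)) * s)
        * Real.exp (-ε * (121 / 64) * 2 ^ (2 * (j + 3)) * t) * ((11 / 8) * 2 ^ (j + 3))
        * Real.sin ((11 / 8) * 2 ^ (j + 3) * (x - t))))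
      - ε * -((2 : ℝ) ^ (-(((j : ℝ) + 3)) * s)
        * Real.exp (-ε * (121 / 64) * 2 ^ (2 * (j + 3)) * t) * ((11 / 8) * 2 ^ (j + 3)) ^ 2
        * Real.cos ((11 / 8) * 2 ^ (j + 3) * (x - t))) = 0 := by
    intro j
    rw [show -ε * (121/64) * (2:ℝ) ^ (2*(j+3)) * t
      = -(ε * (121/64) * (2:ℝ) ^ (2*(j+3))) * t by ring]
    rw [← hcB j]
    ring
  rw [tsum_congr this, tsum_zero]

/-- For `s > 0`, `ε > 0`, `f(x) = Σ_{j=3}^∞ 2^{-js} cos((11/8)·2^j·x)` and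
`F(t,x) = Σ_{j=3}^∞ 2^{-js} e^{-ε(121/64)·2^{2j}·t} cos((11/8)·2^j·(x-t))`:
(i) the series converges uniformly on `[0,∞) × ℝ` and `F` is continuous there;
(ii) `F(0,·) = f`; (iii) for `t > 0`, `F(t,·)` is smooth and `F` satisfies
`∂_t F + ∂_x F - ε ∂²_{xx} F = 0` on `(0,∞) × ℝ`. -/
theorem stmt_15 (s ε : ℝ) (hs : 0 < s) (hε : 0 < ε) (f : ℝ → ℝ) (F : ℝ → ℝ → ℝ)
    (hf : ∀ x : ℝ, f x = ∑' j : ℕ,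
      (2 : ℝ) ^ (-(((j : ℝ) + 3)) * s) * Real.cos ((11 / 8) * 2 ^ (j + 3) * x))
    (hF : ∀ t x : ℝ, F t x = ∑' j : ℕ,
      (2 : ℝ) ^ (-(((j : ℝ) + 3)) * s) * Real.exp (-ε * (121 / 64) * 2 ^ (2 * (j + 3)) * t)
        * Real.cos ((11 / 8) * 2 ^ (j + 3) * (x - t))) :
    TendstoUniformlyOn
      (fun N (q : ℝ × ℝ) => ∑ j ∈ Finset.range N,
        (2 : ℝ) ^ (-(((j : ℝ) + 3)) * s) * Real.exp (-ε * (121 / 64) * 2 ^ (2 * (j + 3)) * q.1)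
          * Real.cos ((11 / 8) * 2 ^ (j + 3) * (q.2 - q.1)))
      (fun q : ℝ × ℝ => F q.1 q.2) atTop (Set.Ici 0 ×ˢ Set.univ) ∧
    ContinuousOn (fun q : ℝ × ℝ => F q.1 q.2) (Set.Ici 0 ×ˢ Set.univ) ∧
    (∀ x : ℝ, F 0 x = f x) ∧
    (∀ t : ℝ, 0 < t → ContDiff ℝ (⊤ : ℕ∞) (F t)) ∧
    (∀ t : ℝ, 0 < t → ∀ x : ℝ,
      deriv (fun τ => F τ x) t + deriv (F t) x - ε * deriv (deriv (F t)) x = 0) := by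
  -- notation
  -- the uniform convergence statement
  have habs : ∀ (j : ℕ) (t x : ℝ), 0 ≤ t →
      ‖(2 : ℝ) ^ (-(((j : ℝ) + 3)) * s) * Real.exp (-ε * (121 / 64) * 2 ^ (2 * (j + 3)) * t)
        * Real.cos ((11 / 8) * 2 ^ (j + 3) * (x - t))‖ ≤ (2 : ℝ) ^ (-(((j : ℝ) + 3)) * s) := by
    intro j t x ht
    have hexp : Real.exp (-ε * (121 / 64) * 2 ^ (2 * (j + 3)) * t) ≤ 1 := by
      rw [Real.exp_le_one_iff]
      have h0 : 0 ≤ ε * (121/64) * (2:ℝ) ^ (2*(j+3)) * t := by positivity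
      linarith
    have hexp0 := (Real.exp_pos (-ε * (121 / 64) * 2 ^ (2 * (j + 3)) * t)).le
    rw [Real.norm_eq_abs, abs_mul, abs_mul,
      abs_of_nonneg (a_pos s j).le, abs_of_nonneg hexp0]
    have hcos := Real.abs_cos_le_one ((11 / 8) * 2 ^ (j + 3) * (x - t))
    calc (2 : ℝ) ^ (-(((j : ℝ) + 3)) * s) * Real.exp (-ε * (121 / 64) * 2 ^ (2 * (j + 3)) * t)
          * |Real.cos ((11 / 8) * 2 ^ (j + 3) * (x - t))|
        ≤ (2 : ℝ) ^ (-(((j : ℝ) + 3)) * s) * Real.exp (-ε * (121 / 64) * 2 ^ (2 * (j + 3)) * t)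
          * 1 := mul_le_mul_of_nonneg_left hcos (by positivity)
      _ = (2 : ℝ) ^ (-(((j : ℝ) + 3)) * s) * Real.exp (-ε * (121 / 64) * 2 ^ (2 * (j + 3)) * t) :=
          mul_one _
      _ ≤ (2 : ℝ) ^ (-(((j : ℝ) + 3)) * s) * 1 := mul_le_mul_of_nonneg_left hexp (a_pos s j).le
      _ = _ := mul_one _
  have hU : TendstoUniformlyOn
      (fun N (q : ℝ × ℝ) => ∑ j ∈ Finset.range N,
        (2 : ℝ) ^ (-(((j : ℝ) + 3)) * s) * Real.exp (-ε * (121 / 64) * 2 ^ (2 * (j + 3)) * q.1)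
          * Real.cos ((11 / 8) * 2 ^ (j + 3) * (q.2 - q.1)))
      (fun q : ℝ × ℝ => F q.1 q.2) atTop (Set.Ici 0 ×ˢ Set.univ) := by
    have hfun : (fun q : ℝ × ℝ => F q.1 q.2) = fun q : ℝ × ℝ => ∑' j : ℕ,
        (2 : ℝ) ^ (-(((j : ℝ) + 3)) * s) * Real.exp (-ε * (121 / 64) * 2 ^ (2 * (j + 3)) * q.1)
          * Real.cos ((11 / 8) * 2 ^ (j + 3) * (q.2 - q.1)) :=
      funext fun q => hF q.1 q.2
    rw [hfun]
    apply tendstoUniformlyOn_tsum_nat (sum_a hs)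
    rintro j ⟨t, x⟩ hq
    exact habs j t x hq.1
  refine ⟨hU, ?_, ?_, ?_, ?_⟩
  · -- continuity
    apply hU.continuousOn
    refine Frequently.of_forall fun N => ?_
    apply Continuous.continuousOn
    apply continuous_finset_sum
    intro j _
    apply Continuous.mul
    · exact continuous_const.mul (Real.continuous_exp.comp (continuous_const.mul continuous_fst))
    · exact Real.continuous_cos.comp (continuous_const.mul (continuous_snd.sub continuous_fst))
  · -- F 0 = f
    intro x
    rw [hF 0 x, hf x]
    exact tsum_congr fun j => by norm_num
  · -- smoothness
    intro t ht
    have hFt : F t = fun x : ℝ => ∑' j : ℕ,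
        (2 : ℝ) ^ (-(((j : ℝ) + 3)) * s) * Real.exp (-ε * (121 / 64) * 2 ^ (2 * (j + 3)) * t)
          * Real.cos ((11 / 8) * 2 ^ (j + 3) * (x - t)) := funext fun x => hF t x
    rw [hFt]
    exact smooth_part hs hε ht
  · -- the PDE
    intro t ht x
    have h1 : (fun τ => F τ x) = fun τ : ℝ => ∑' j : ℕ,
        (2 : ℝ) ^ (-(((j : ℝ) + 3)) * s) * Real.exp (-ε * (121 / 64) * 2 ^ (2 * (j + 3)) * τ)
          * Real.cos ((11 / 8) * 2 ^ (j + 3) * (x - τ)) := funext fun τ => hF τ x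
    have h2 : F t = fun y : ℝ => ∑' j : ℕ,
        (2 : ℝ) ^ (-(((j : ℝ) + 3)) * s) * Real.exp (-ε * (121 / 64) * 2 ^ (2 * (j + 3)) * t)
          * Real.cos ((11 / 8) * 2 ^ (j + 3) * (y - t)) := funext fun y => hF t y
    rw [h1, h2]
    exact pde_part hs hε ht x
end
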